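/- If the sign sequence σ is good (i.e., there is a σ-stroll in the auxiliary pattern graph D from the pattern ({1,2},{3},{4}) to the pattern ({1,2},{4},{3})), then the sign sequence −σ obtained by negating every entry of σ is also good. -/
import Mathlib


/-- A pattern: a cyclically ordered partition of the four colours (here
`Fin 4`) into a pair and two singletons, recorded canonically as the pair
followed by the two singletons `{x}`, `{y}` in cyclic order. -/
structure Pattern where
  pair : Finset (Fin 4)
  x : Fin 4
  y : Fin 4
  pair_card : pair.card = 2
  x_not_mem : x ∉ pair
  y_not_mem : y ∉ pair
  x_ne_y : x ≠ y
deriving DecidableEq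

/-- `ρ` is `+`-compatible with `π`: either `ρ = π`, or `ρ` is obtained from `π`
by moving one of the paired colours to the preceding part (in cyclic order). -/
def PlusCompat (π ρ : Pattern) : Prop :=
  ρ = π ∨ ∃ u ∈ π.pair, ∃ v ∈ π.pair, u ≠ v ∧
    ρ.pair = {π.y, u} ∧ ρ.x = v ∧ ρ.y = π.x

/-- `π` and `ρ` are `0`-compatible: the pair of `ρ` consists of the two colours
unpaired in `π`, and vice versa (this relation is symmetric; these are the
undirected edges of the auxiliary graph `D`). -/
def ZeroCompat (π ρ : Pattern) : Prop :=
  ρ.pair = {π.x, π.y} ∧ π.pair = {ρ.x, ρ.y}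

/-- `IsStroll σ π τ`: there is a `σ`-stroll in the auxiliary graph `D` from the
pattern `π` to the pattern `τ`.  Signs are elements of `ZMod 3`, with `1`
standing for `+` and `2` for `−`. -/
inductive IsStroll : List (ZMod 3) → Pattern → Pattern → Prop
  | nil (π : Pattern) : IsStroll [] π π
  | zero {σ : List (ZMod 3)} {π ρ τ : Pattern} :
      ZeroCompat π ρ → IsStroll σ ρ τ → IsStroll (0 :: σ) π τ
  | plus {σ : List (ZMod 3)} {π ρ τ : Pattern} :
      PlusCompat π ρ → IsStroll σ ρ τ → IsStroll (1 :: σ) π τ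
  | minus {σ : List (ZMod 3)} {π ρ τ : Pattern} :
      PlusCompat ρ π → IsStroll σ ρ τ → IsStroll (2 :: σ) π τ

/-- The pattern `({1,2},{3},{4})`. -/
def basePattern : Pattern :=
  ⟨{0, 1}, 2, 3, by decide, by decide, by decide, by decide⟩

/-- The pattern `({1,2},{4},{3})`. -/
def goodEnd : Pattern :=
  ⟨{0, 1}, 3, 2, by decide, by decide, by decide, by decide⟩

/-- The pattern `({3,4},{1},{2})`. -/
def reversingEnd : Pattern :=
  ⟨{2, 3}, 0, 1, by decide, by decide, by decide, by decide⟩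

/-- A sign sequence is good if some stroll runs from `({1,2},{3},{4})` to
`({1,2},{4},{3})`. -/
def GoodSeq (σ : List (ZMod 3)) : Prop := IsStroll σ basePattern goodEnd

/-- A sign sequence is reversing if some stroll runs from `({1,2},{3},{4})` to
`({3,4},{1},{2})`. -/
def ReversingSeq (σ : List (ZMod 3)) : Prop := IsStroll σ basePattern reversingEnd


/-- The colour swap `2 ↔ 3`. -/
def swTheta : Fin 4 → Fin 4 := ![0, 1, 3, 2]

lemma swTheta_inj : Function.Injective swTheta := by decide

/-- The anti-automorphism of the auxiliary graph: swap colours 2,3 and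
reverse the cyclic order of the singletons. -/
def theta (π : Pattern) : Pattern where
  pair := π.pair.image swTheta
  x := swTheta π.y
  y := swTheta π.x
  pair_card := by
    rw [Finset.card_image_of_injective _ swTheta_inj, π.pair_card]
  x_not_mem := by
    intro h
    obtain ⟨a, ha, hae⟩ := Finset.mem_image.1 h
    exact π.y_not_mem (swTheta_inj hae ▸ ha)
  y_not_mem := by
    intro h
    obtain ⟨a, ha, hae⟩ := Finset.mem_image.1 h
    exact π.x_not_mem (swTheta_inj hae ▸ ha)
  x_ne_y := fun h => π.x_ne_y (swTheta_inj h).symm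

lemma pair_eq_of_mem {π : Pattern} {u v : Fin 4} (hu : u ∈ π.pair)
    (hv : v ∈ π.pair) (huv : u ≠ v) : π.pair = {u, v} := by
  have hsub : ({u, v} : Finset (Fin 4)) ⊆ π.pair := by
    intro a ha
    rcases Finset.mem_insert.1 ha with h | h
    · exact h ▸ hu
    · exact (Finset.mem_singleton.1 h) ▸ hv
  have hcard : ({u, v} : Finset (Fin 4)).card = 2 := by
    rw [Finset.card_insert_of_notMem (by simpa using huv), Finset.card_singleton]
  exact (Finset.eq_of_subset_of_card_le hsub (by rw [hcard, π.pair_card])).symm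

lemma theta_plus {π ρ : Pattern} (h : PlusCompat π ρ) :
    PlusCompat (theta ρ) (theta π) := by
  rcases h with h | ⟨u, hu, v, hv, huv, hpair, hx, hy⟩
  · exact Or.inl (by rw [h])
  · right
    refine ⟨swTheta u, ?_, swTheta π.y, ?_, ?_, ?_, ?_, ?_⟩
    · simp only [theta, hpair]
      exact Finset.mem_image_of_mem _ (by simp)
    · simp only [theta, hpair]
      exact Finset.mem_image_of_mem _ (by simp)
    · intro h
      exact π.y_not_mem ((swTheta_inj h) ▸ hu)
    · show π.pair.image swTheta = {swTheta ρ.x, swTheta u}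
      rw [hx, pair_eq_of_mem hu hv huv]
      simp only [Finset.image_insert, Finset.image_singleton]
      exact Finset.pair_comm _ _
    · rfl
    · show swTheta π.x = swTheta ρ.y
      rw [hy]

lemma theta_zero {π ρ : Pattern} (h : ZeroCompat π ρ) :
    ZeroCompat (theta π) (theta ρ) := by
  obtain ⟨h1, h2⟩ := h
  constructor
  · show ρ.pair.image swTheta = {swTheta π.y, swTheta π.x}
    rw [h1]
    simp [Finset.image_insert, Finset.image_singleton, Finset.pair_comm]
  · show π.pair.image swTheta = {swTheta ρ.y, swTheta ρ.x}
    rw [h2]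
    simp [Finset.image_insert, Finset.image_singleton, Finset.pair_comm]

lemma theta_stroll {σ : List (ZMod 3)} {π τ : Pattern} (h : IsStroll σ π τ) :
    IsStroll (σ.map (fun s => -s)) (theta π) (theta τ) := by
  induction h with
  | nil π => exact IsStroll.nil _
  | zero hz _ ih =>
      have e : ((-0 : ZMod 3)) = 0 := by decide
      simpa [e] using IsStroll.zero (theta_zero hz) ih
  | plus hp _ ih =>
      have e : ((-1 : ZMod 3)) = 2 := by decide
      simpa [e] using IsStroll.minus (theta_plus hp) ih
  | minus hp _ ih =>
      have e : ((-2 : ZMod 3)) = 1 := by decide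
      simpa [e] using IsStroll.plus (theta_plus hp) ih

lemma theta_base : theta basePattern = basePattern := by decide

lemma theta_good : theta goodEnd = goodEnd := by decide

/-- If `σ` is good then so is `-σ`, the sequence with every sign negated. -/
theorem good_neg (σ : List (ZMod 3)) (h : GoodSeq σ) :
    GoodSeq (σ.map (fun s => -s)) := by
  have := theta_stroll h
  rwa [theta_base, theta_good] at this
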